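/- Let G = (F ∪ C, E) be a finite bipartite graph with no isolated vertices and F nonempty. With the random selection procedure where each facility i is chosen with probability 1/(deg_F(i)+1), the expected number of edges removed in one iteration is at least sqrt(|E|). -/

import Mathlib

open MeasureTheory ProbabilityTheory Finset
open scoped Classical ENNReal

/-- `i'` is a neighbor of `i` in the facility graph `G_F`. -/
def facNbr {F C : Type*} (A : F → C → Prop) (i i' : F) : Prop :=
  i' ≠ i ∧ ∃ j, A i j ∧ A i' j

/-- Degree of facility `i` in the facility graph `G_F`. -/
noncomputable def degGF {F C : Type*} [Fintype F] (A : F → C → Prop) (i : F) : ℕ :=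
  (Finset.univ.filter (fun i' => facNbr A i i')).card

/-- Degree of facility `i` in the bipartite graph `G`. -/
noncomputable def degFac {F C : Type*} [Fintype C] (A : F → C → Prop) (i : F) : ℕ :=
  (Finset.univ.filter (fun j => A i j)).card

/-- Degree of client `j` in the bipartite graph `G`. -/
noncomputable def degCl {F C : Type*} [Fintype F] (A : F → C → Prop) (j : C) : ℕ :=
  (Finset.univ.filter (fun i => A i j)).card

/-- Facility `i` is selected in outcome `ω` iff its random value strictly exceeds
those of all its `G_F`-neighbors. -/
def selected {F C Ω : Type*} (A : F → C → Prop) (r : F → Ω → ℝ) (i : F) (ω : Ω) : Prop :=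
  ∀ i', facNbr A i i' → r i' ω < r i ω

/-! Facility `i` is selected exactly when its value is the largest among itself and its
`d i` neighbours in `G_F`; for independent uniform values this has probability `1 / (d i + 1)`.
Selecting `i` removes every edge at its clients, `c i = ∑_{j ∼ i} deg j` of them, so the
expectation is `S = ∑ i, c i / (d i + 1)`. The closed `G_F`-neighbourhood of `i` is covered by
the neighbourhoods of its clients, so `d i + 1 ≤ c i` and `S ≥ |F|`; and `deg i ≤ c i`,
`d i + 1 ≤ |F|` give `S ≥ |E| / |F|`. Hence `S ^ 2 ≥ |E|`. -/

lemma restrict_Icc_zero_one_Iio {t : ℝ} (ht : t ∈ Set.Icc (0 : ℝ) 1) :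
    volume.restrict (Set.Icc (0 : ℝ) 1) (Set.Iio t) = ENNReal.ofReal t := by
  have : Set.Iio t ∩ Set.Icc 0 1 = Set.Ico 0 t := by
    ext x; simp only [Set.mem_inter_iff, Set.mem_Iio, Set.mem_Icc, Set.mem_Ico]; grind
  rw [Measure.restrict_apply measurableSet_Iio, this, Real.volume_Ico, sub_zero]

lemma lintegral_restrict_Icc_zero_one_Iio_pow (n : ℕ) :
    ∫⁻ t, volume.restrict (Set.Icc (0 : ℝ) 1) (Set.Iio t) ^ n ∂volume.restrict (Set.Icc 0 1)
      = ENNReal.ofReal (1 / (n + 1)) := by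
  rw [setLIntegral_congr_fun measurableSet_Icc fun t ht => by
    rw [restrict_Icc_zero_one_Iio ht, ← ENNReal.ofReal_pow ht.1],
    ← ofReal_integral_eq_lintegral_ofReal (continuous_pow n).integrableOn_Icc
      ((ae_restrict_iff' measurableSet_Icc).2 (.of_forall fun t ht => pow_nonneg ht.1 n)),
    integral_Icc_eq_integral_Ioc, ← intervalIntegral.integral_of_le zero_le_one, integral_pow]
  simp

namespace ProbabilityTheory.iIndepFun

variable {ι Ω : Type*} [MeasurableSpace Ω] {μ : Measure Ω} {X : ι → Ω → ℝ} {ν : Measure ℝ}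

lemma measure_forall_lt (hindep : iIndepFun X μ) (hmeas : ∀ i, Measurable (X i))
    (hlaw : ∀ i, μ.map (X i) = ν) (N : Finset ι) (t : ℝ) :
    μ {ω | ∀ j ∈ N, X j ω < t} = ν (Set.Iio t) ^ #N := by
  have hlaw_Iio : ∀ j, μ (X j ⁻¹' Set.Iio t) = ν (Set.Iio t) := fun j => by
    rw [← hlaw j, Measure.map_apply (hmeas j) measurableSet_Iio]
  have hset : {ω | ∀ j ∈ N, X j ω < t} = ⋂ j ∈ N, X j ⁻¹' Set.Iio t := by ext; simp
  rw [hset, hindep.measure_inter_preimage_eq_mul N (sets := fun _ => Set.Iio t)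
    (fun _ _ => measurableSet_Iio)]
  simp only [hlaw_Iio, prod_const]

lemma measure_forall_lt_of_uniform (hindep : iIndepFun X μ) (hmeas : ∀ i, Measurable (X i))
    (hunif : ∀ i, μ.map (X i) = volume.restrict (Set.Icc (0 : ℝ) 1))
    {i : ι} {N : Finset ι} (hi : i ∉ N) :
    μ {ω | ∀ j ∈ N, X j ω < X i ω} = ENNReal.ofReal (1 / (#N + 1)) := by
  set ν := volume.restrict (Set.Icc (0 : ℝ) 1)
  set Y : Ω → (N → ℝ) := fun ω j => X j ω
  have hY : Measurable Y := measurable_pi_lambda _ fun j => hmeas j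
  have hXY : IndepFun (X i) Y μ :=
    (hindep.indepFun_finset {i} N (disjoint_singleton_left.2 hi) hmeas).comp
      (measurable_pi_apply (⟨i, mem_singleton_self i⟩ : ({i} : Finset ι))) measurable_id
  set s : Set (ℝ × (N → ℝ)) := {p | ∀ j, p.2 j < p.1}
  have hs : MeasurableSet s := by
    simp only [s, Set.ofPred_forall]
    exact .iInter fun j => measurableSet_lt measurable_snd.eval measurable_fst
  have hevent : {ω | ∀ j ∈ N, X j ω < X i ω} = (fun ω => (X i ω, Y ω)) ⁻¹' s := by
    ext; simp [s, Y]
  -- The joint law of `(X i, Y)` is `ν ⊗ law Y`, whose slice at `t` has mass `t ^ #N`.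
  have hslice (t : ℝ) : μ.map Y (Prod.mk t ⁻¹' s) = ν (Set.Iio t) ^ #N := by
    rw [Measure.map_apply hY (measurable_prodMk_left hs)]
    convert hindep.measure_forall_lt hmeas hunif N t using 2
    ext; simp [s, Y]
  have : IsProbabilityMeasure μ := hindep.isProbabilityMeasure
  rw [hevent, ← Measure.map_apply ((hmeas i).prodMk hY) hs,
    (indepFun_iff_map_prod_eq_prod_map_map (hmeas i).aemeasurable hY.aemeasurable).1 hXY,
    hunif i, Measure.prod_apply hs]
  simp only [hslice]
  exact lintegral_restrict_Icc_zero_one_Iio_pow _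

end ProbabilityTheory.iIndepFun

lemma not_facNbr_self {F C : Type*} (A : F → C → Prop) (i : F) : ¬ facNbr A i i :=
  fun h => h.1 rfl

section FacilityGraph

variable {F C : Type*} [Fintype F] (A : F → C → Prop)

lemma degGF_add_one_le_card (i : F) : degGF A i + 1 ≤ Fintype.card F := by
  rw [degGF, ← card_insert_of_notMem (by simpa using not_facNbr_self A i)]
  exact card_le_univ _

variable [Fintype C]

noncomputable def removedEdges (i : F) : ℝ :=
  ∑ j ∈ univ.filter (fun j => A i j), (degCl A j : ℝ)

lemma degGF_add_one_le_removedEdges {i : F} (hi : ∃ j, A i j) :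
    (degGF A i : ℝ) + 1 ≤ removedEdges A i := by
  have hcover : insert i (univ.filter (facNbr A i)) ⊆
      (univ.filter (fun j => A i j)).biUnion (fun j => univ.filter (fun i' => A i' j)) := by
    intro i' hi'
    simp only [mem_insert, mem_filter, mem_univ, true_and] at hi'
    simp only [mem_biUnion, mem_filter, mem_univ, true_and]
    rcases hi' with rfl | ⟨-, j, hij, hi'j⟩
    · obtain ⟨j, hij⟩ := hi
      exact ⟨j, hij, hij⟩
    · exact ⟨j, hij, hi'j⟩
  have hcard := (card_le_card hcover).trans card_biUnion_le
  rw [card_insert_of_notMem (by simpa using not_facNbr_self A i)] at hcard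
  unfold removedEdges degGF degCl
  exact_mod_cast hcard

lemma degFac_le_removedEdges (i : F) : (degFac A i : ℝ) ≤ removedEdges A i := by
  rw [degFac, card_eq_sum_ones, Nat.cast_sum, removedEdges]
  refine sum_le_sum fun j hj => ?_
  exact_mod_cast card_pos.2 ⟨i, by simpa using hj⟩

lemma card_le_sum_removedEdges_div (hF : ∀ i, ∃ j, A i j) :
    (Fintype.card F : ℝ) ≤ ∑ i, removedEdges A i / (degGF A i + 1) := by
  rw [← card_univ, card_eq_sum_ones, Nat.cast_sum]
  refine sum_le_sum fun i _ => ?_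
  rw [Nat.cast_one, one_le_div (by positivity)]
  exact degGF_add_one_le_removedEdges A (hF i)

lemma sum_degFac_le_card_mul_sum_removedEdges_div :
    ∑ i, (degFac A i : ℝ) ≤ Fintype.card F * ∑ i, removedEdges A i / (degGF A i + 1) := by
  rw [mul_sum]
  refine sum_le_sum fun i _ => ?_
  have hdeg : 1 ≤ (Fintype.card F : ℝ) / (degGF A i + 1) := by
    rw [one_le_div (by positivity)]
    exact_mod_cast degGF_add_one_le_card A i
  calc (degFac A i : ℝ) ≤ removedEdges A i := degFac_le_removedEdges A i
    _ ≤ removedEdges A i * (Fintype.card F / (degGF A i + 1)) :=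
      le_mul_of_one_le_right ((Nat.cast_nonneg _).trans (degFac_le_removedEdges A i)) hdeg
    _ = Fintype.card F * (removedEdges A i / (degGF A i + 1)) := by ring

end FacilityGraph

section Selection

variable {F C Ω : Type*} [Fintype F] (A : F → C → Prop) {r : F → Ω → ℝ}

lemma selected_iff {i : F} {ω : Ω} :
    selected A r i ω ↔ ∀ i' ∈ univ.filter (facNbr A i), r i' ω < r i ω := by
  simp [selected]

variable [MeasurableSpace Ω] {μ : Measure Ω}

lemma measurableSet_selected (hmeas : ∀ i, Measurable (r i)) (i : F) :
    MeasurableSet {ω | selected A r i ω} := by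
  simp only [selected_iff, Set.ofPred_forall]
  exact .iInter fun i' => .iInter fun _ => measurableSet_lt (hmeas i') (hmeas i)

lemma measureReal_selected (hmeas : ∀ i, Measurable (r i)) (hindep : iIndepFun r μ)
    (hunif : ∀ i, μ.map (r i) = volume.restrict (Set.Icc (0 : ℝ) 1)) (i : F) :
    μ.real {ω | selected A r i ω} = 1 / (degGF A i + 1) := by
  simp only [measureReal_def, selected_iff]
  rw [hindep.measure_forall_lt_of_uniform hmeas hunif (by simpa using not_facNbr_self A i),
    ENNReal.toReal_ofReal (by positivity), degGF]

lemma integral_sum_ite_selected (hmeas : ∀ i, Measurable (r i)) (hindep : iIndepFun r μ)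
    (hunif : ∀ i, μ.map (r i) = volume.restrict (Set.Icc (0 : ℝ) 1)) (w : F → ℝ) :
    ∫ ω, (∑ i, if selected A r i ω then w i else 0) ∂μ = ∑ i, w i / (degGF A i + 1) := by
  have : IsProbabilityMeasure μ := hindep.isProbabilityMeasure
  have hind (i : F) : (fun ω => if selected A r i ω then w i else 0)
      = Set.indicator {ω | selected A r i ω} (fun _ => w i) := by
    ext ω; simp [Set.indicator_apply]
  rw [integral_finsetSum _ fun i _ =>
    hind i ▸ (integrable_const (w i)).indicator (measurableSet_selected A hmeas i)]
  refine sum_congr rfl fun i _ => ?_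
  rw [hind, integral_indicator_const _ (measurableSet_selected A hmeas i),
    measureReal_selected A hmeas hindep hunif, smul_eq_mul]
  ring

end Selection

theorem expected_removed_edges_ge_sqrt_general {F C Ω : Type*} [Fintype F] [Fintype C]
    [MeasurableSpace Ω] (μ : Measure Ω)
    (A : F → C → Prop)
    (hF : ∀ i : F, ∃ j, A i j)
    (r : F → Ω → ℝ)
    (hmeas : ∀ i, Measurable (r i))
    (hindep : iIndepFun r μ)
    (hunif : ∀ i, μ.map (r i) = volume.restrict (Set.Icc (0 : ℝ) 1)) :
    Real.sqrt (∑ i : F, (degFac A i : ℝ))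
      ≤ ∫ ω, (∑ i : F, if selected A r i ω then
          (∑ j ∈ Finset.univ.filter (fun j => A i j), (degCl A j : ℝ)) else 0) ∂μ := by
  change _ ≤ ∫ ω, (∑ i, if selected A r i ω then removedEdges A i else 0) ∂μ
  rw [integral_sum_ite_selected A hmeas hindep hunif]
  set S := ∑ i, removedEdges A i / (degGF A i + 1)
  have hcard : (Fintype.card F : ℝ) ≤ S := card_le_sum_removedEdges_div A hF
  have hE : ∑ i, (degFac A i : ℝ) ≤ Fintype.card F * S :=
    sum_degFac_le_card_mul_sum_removedEdges_div A
  have hS : 0 ≤ S := (Nat.cast_nonneg _).trans hcard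
  rw [Real.sqrt_le_left hS]
  calc ∑ i, (degFac A i : ℝ) ≤ Fintype.card F * S := hE
    _ ≤ S ^ 2 := by rw [sq]; exact mul_le_mul_of_nonneg_right hcard hS

/-- For a bipartite graph with no isolated vertices, the expected number of edges
removed in one iteration of the random selection procedure is at least
`sqrt(|E|)`. -/
theorem expected_removed_edges_ge_sqrt {F C Ω : Type*} [Fintype F] [Fintype C] [Nonempty F]
    [MeasurableSpace Ω] (μ : Measure Ω) [IsProbabilityMeasure μ]
    (A : F → C → Prop)
    (hF : ∀ i : F, ∃ j, A i j) (hC : ∀ j : C, ∃ i, A i j)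
    (r : F → Ω → ℝ)
    (hmeas : ∀ i, Measurable (r i))
    (hindep : iIndepFun r μ)
    (hunif : ∀ i, μ.map (r i) = volume.restrict (Set.Icc (0 : ℝ) 1))
    (hdistinct : ∀ i i' : F, i ≠ i' → μ {ω | r i ω = r i' ω} = 0) :
    Real.sqrt (∑ i : F, (degFac A i : ℝ))
      ≤ ∫ ω, (∑ i : F, if selected A r i ω then
          (∑ j ∈ Finset.univ.filter (fun j => A i j), (degCl A j : ℝ)) else 0) ∂μ :=
  expected_removed_edges_ge_sqrt_general μ A hF r hmeas hindep hunif
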